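/- arXiv:2410.06436 — 10 statements merged into one kernel-verified Lean document; each statement's English description precedes it below -/
import Mathlib

section
/- Let g ≥ 4 be an integer. Then (0,−1) ∈ J(g) and (0,0) ∈ J(g); for every (c,d) ∈ J(g) with (c,d) ≠ (0,−1) one has μ(c,d) < μ(0,−1); and for every (c,d) ∈ J(g) with (c,d) ∉ {(0,−1),(0,0)} one has μ(c,d) < μ(0,0). -/
/-- The slope μ(c,d) of the paper. -/
noncomputable def mu (g c d : ℤ) : ℚ :=
  if g % 2 = 0 then ((g : ℚ) - 1 - 4 * d - (2 * c + 1) ^ 2) / (2 * (2 * c + 1) ^ 2)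
  else ((g : ℚ) - 1 - 4 * d) / (2 * (2 * c + 1) ^ 2)

/-- The index set J(g) of destabilizing pairs. -/
def J (g : ℤ) : Set (ℤ × ℤ) :=
  {p | 0 ≤ p.1 ∧ -1 ≤ p.2 ∧ (2 * p.1 + 1) ∣ ((g - 1) * p.1 ^ 2 - p.2) ∧
    0 < mu g p.1 p.2}

lemma mu0_mono (g d d' : ℤ) (h : d' < d) : mu g 0 d < mu g 0 d' := by
  have h' : (d' : ℚ) < d := by exact_mod_cast h
  unfold mu
  split_ifs with hpar <;>
  · rw [div_lt_div_iff₀ (by norm_num) (by norm_num)]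
    push_cast
    nlinarith

lemma mu_lt_mu00 (g c d : ℤ) (hg : 4 ≤ g) (hc : 1 ≤ c) (hd : -1 ≤ d) :
    mu g c d < mu g 0 0 := by
  have hg' : (4 : ℚ) ≤ g := by exact_mod_cast hg
  have hd' : (-1 : ℚ) ≤ d := by exact_mod_cast hd
  have hc' : (1 : ℚ) ≤ c := by exact_mod_cast hc
  have hC : (9 : ℚ) ≤ (2 * (c : ℚ) + 1) ^ 2 := by nlinarith
  unfold mu
  split_ifs with hpar
  · rw [div_lt_div_iff₀ (by positivity) (by norm_num)]
    have key : 9 * ((g : ℚ) - 2) ≤ (2 * (c : ℚ) + 1) ^ 2 * (g - 2) :=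
      mul_le_mul_of_nonneg_right hC (by linarith)
    push_cast
    nlinarith
  · rw [div_lt_div_iff₀ (by positivity) (by norm_num)]
    have key : 9 * ((g : ℚ) - 1) ≤ (2 * (c : ℚ) + 1) ^ 2 * (g - 1) :=
      mul_le_mul_of_nonneg_right hC (by linarith)
    push_cast
    nlinarith

/-- (0,−1) and (0,0) lie in J(g), μ(0,−1) is the unique largest slope
and μ(0,0) is the unique second largest slope. -/
theorem top_slopes (g : ℤ) (hg : 4 ≤ g) :
    ((0 : ℤ), (-1 : ℤ)) ∈ J g ∧ ((0 : ℤ), (0 : ℤ)) ∈ J g ∧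
    (∀ p ∈ J g, p ≠ ((0 : ℤ), (-1 : ℤ)) → mu g p.1 p.2 < mu g 0 (-1)) ∧
    (∀ p ∈ J g, p ≠ ((0 : ℤ), (-1 : ℤ)) → p ≠ ((0 : ℤ), (0 : ℤ)) →
      mu g p.1 p.2 < mu g 0 0) := by
  have hg' : (4 : ℚ) ≤ g := by exact_mod_cast hg
  have hpos : ∀ d : ℤ, (d : ℚ) ≤ 0 → 0 < mu g 0 d := by
    intro d hd
    unfold mu
    split_ifs <;> · apply div_pos (by push_cast; linarith) (by norm_num)
  refine ⟨⟨by norm_num, by norm_num, by simp, hpos (-1) (by norm_num)⟩,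
    ⟨by norm_num, by norm_num, by simp, hpos 0 (by norm_num)⟩, ?_, ?_⟩
  · rintro ⟨c, d⟩ ⟨hc, hd, -, -⟩ hne
    simp only at hc hd ⊢
    rcases eq_or_lt_of_le hc with h0 | h1
    · subst h0
      have hd' : -1 < d := lt_of_le_of_ne hd (by rintro rfl; exact hne rfl)
      exact mu0_mono g d (-1) hd'
    · exact (mu_lt_mu00 g c d hg h1 hd).trans (mu0_mono g 0 (-1) (by norm_num))
  · rintro ⟨c, d⟩ ⟨hc, hd, -, -⟩ hne1 hne2
    simp only at hc hd ⊢
    rcases eq_or_lt_of_le hc with h0 | h1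
    · subst h0
      have hd1 : -1 < d := lt_of_le_of_ne hd (by rintro rfl; exact hne1 rfl)
      have hd0 : 0 < d := lt_of_le_of_ne hd1 (by rintro rfl; exact hne2 rfl)
      exact mu0_mono g d 0 hd0
    · exact mu_lt_mu00 g c d hg h1 hd
end

section
/- Let g ≥ 5 be an odd integer. There exists a pair (c,d) ∈ J(g) with μ(c,d) = 1 (equivalently, with g − 1 − 4d = 2(2c+1)²) if and only if g ≡ 3 mod 4; moreover, when g ≡ 3 mod 4 the pair (0, (g−3)/4) belongs to J(g) and satisfies μ(0,(g−3)/4) = 1. -/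
lemma mu_odd (g c d : ℤ) (h : g % 2 ≠ 0) :
    mu g c d = ((g : ℚ) - 1 - 4 * d) / (2 * (2 * c + 1) ^ 2) := by
  simp [mu, h]

lemma mu_eq_one (g c d : ℤ) (hg : g % 2 ≠ 0) (hc : 0 ≤ c) :
    mu g c d = 1 ↔ g - 1 - 4 * d = 2 * (2 * c + 1) ^ 2 := by
  have hden : (2 * (2 * (c : ℚ) + 1) ^ 2) ≠ 0 := by
    have : (2 * (c : ℚ) + 1) ≠ 0 := by
      have : (0 : ℚ) ≤ (c : ℚ) := by exact_mod_cast hc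
      nlinarith
    positivity
  rw [mu_odd g c d hg, div_eq_one_iff_eq hden]
  constructor
  · intro h
    have : ((g - 1 - 4 * d : ℤ) : ℚ) = ((2 * (2 * c + 1) ^ 2 : ℤ) : ℚ) := by
      push_cast; push_cast at h; linarith
    exact_mod_cast this
  · intro h
    have : ((g - 1 - 4 * d : ℤ) : ℚ) = ((2 * (2 * c + 1) ^ 2 : ℤ) : ℚ) := by
      exact_mod_cast h
    push_cast at this; push_cast; linarith

/-- for odd g ≥ 5, a pair (c,d) ∈ J(g) with μ(c,d) = 1
(equivalently g − 1 − 4d = 2(2c+1)²) exists iff g ≡ 3 mod 4, and when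
g ≡ 3 mod 4 the pair (0,(g−3)/4) is such a pair. -/
theorem slope_one_wall (g : ℤ) (hg : 5 ≤ g) (hgo : Odd g) :
    ((∃ p ∈ J g, mu g p.1 p.2 = 1) ↔ g % 4 = 3) ∧
    ((∃ p ∈ J g, g - 1 - 4 * p.2 = 2 * (2 * p.1 + 1) ^ 2) ↔ g % 4 = 3) ∧
    (g % 4 = 3 → ((0 : ℤ), (g - 3) / 4) ∈ J g ∧ mu g 0 ((g - 3) / 4) = 1) := by
  have hg2 : g % 2 ≠ 0 := by
    rcases hgo with ⟨k, hk⟩; omega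
  -- forward: an equation g-1-4d = 2(2c+1)^2 forces g % 4 = 3
  have fwd : ∀ c d : ℤ, g - 1 - 4 * d = 2 * (2 * c + 1) ^ 2 → g % 4 = 3 := by
    intro c d h
    have : g - 1 - 4 * d = 8 * c ^ 2 + 8 * c + 2 := by ring_nf; ring_nf at h; linarith
    omega
  -- the special pair when g % 4 = 3
  have special : g % 4 = 3 → ((0 : ℤ), (g - 3) / 4) ∈ J g ∧ mu g 0 ((g - 3) / 4) = 1 := by
    intro h4
    have hd : 4 * ((g - 3) / 4) = g - 3 := by omega
    have heq : g - 1 - 4 * ((g - 3) / 4) = 2 * (2 * 0 + 1) ^ 2 := by omega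
    have hmu : mu g 0 ((g - 3) / 4) = 1 := (mu_eq_one g 0 _ hg2 le_rfl).2 heq
    refine ⟨⟨le_rfl, by omega, ⟨(g - 1) * 0 ^ 2 - (g - 3) / 4, by ring⟩, by
      rw [hmu]; norm_num⟩, hmu⟩
  refine ⟨⟨?_, ?_⟩, ⟨?_, ?_⟩, special⟩
  · rintro ⟨p, hp, hmu⟩
    exact fwd p.1 p.2 ((mu_eq_one g p.1 p.2 hg2 hp.1).1 hmu)
  · intro h4
    obtain ⟨hJ, hmu⟩ := special h4
    exact ⟨_, hJ, hmu⟩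
  · rintro ⟨p, hp, heq⟩
    exact fwd p.1 p.2 heq
  · intro h4
    obtain ⟨hJ, hmu⟩ := special h4
    exact ⟨_, hJ, (mu_eq_one g 0 _ hg2 le_rfl).1 hmu⟩
end

section
/- Let g ≥ 4 be an integer with g ≢ 3 mod 4, and let (c,d) ∈ J(g). If g is even, then 2(2c+1)·μ(c,d) is a positive even integer. If g ≡ 1 mod 4, then (2c+1)·μ(c,d) is a positive even integer. -/
/-- let g ≥ 4 with g ≢ 3 mod 4 and (c,d) ∈ J(g).  If g is even then
2(2c+1)μ(c,d) is a positive even integer; if g ≡ 1 mod 4 then (2c+1)μ(c,d) is a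
positive even integer. -/
theorem t_is_even (g : ℤ) (hg : 4 ≤ g) (hg4 : g % 4 ≠ 3) (c d : ℤ)
    (h : (c, d) ∈ J g) :
    (Even g → ∃ n : ℤ, 0 < n ∧ Even n ∧
      2 * (2 * (c : ℚ) + 1) * mu g c d = (n : ℚ)) ∧
    (g % 4 = 1 → ∃ n : ℤ, 0 < n ∧ Even n ∧
      (2 * (c : ℚ) + 1) * mu g c d = (n : ℚ)) := by
  obtain ⟨hc, hd, hdvd, hmu⟩ := h
  simp only at hc hd hdvd hmu
  have hposc : (0:ℤ) < 2 * c + 1 := by linarith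
  have hposcQ : (0:ℚ) < 2 * c + 1 := by exact_mod_cast hposc
  have hneQ : (2 * (c:ℚ) + 1) ≠ 0 := ne_of_gt hposcQ
  have h2 : IsCoprime ((2*c+1):ℤ) 2 := ⟨1, -c, by ring⟩
  have h4 : IsCoprime ((2*c+1):ℤ) 4 := by
    have h44 : (4:ℤ) = 2 * 2 := by norm_num
    rw [h44]; exact h2.mul_right h2
  -- key divisibility : (2c+1) ∣ g - 1 - 4d
  have hdvd' : (2*c+1) ∣ (g - 1 - 4*d) := by
    have ha : (2*c+1) ∣ 4 * ((g-1)*c^2 - d) := hdvd.mul_left 4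
    have hb : (2*c+1) ∣ (g-1)*(4*c^2-1) := ⟨(g-1)*(2*c-1), by ring⟩
    have heq : 4 * ((g-1)*c^2 - d) = (g-1)*(4*c^2-1) + (g - 1 - 4*d) := by ring
    rw [heq] at ha
    exact (dvd_add_right hb).mp ha
  obtain ⟨k, hk⟩ := hdvd'
  have hkQ : (g:ℚ) - 1 - 4*d = (2*c+1)*k := by exact_mod_cast hk
  constructor
  · intro hgeven
    have hg2 : g % 2 = 0 := Int.even_iff.mp hgeven
    have hmu' : mu g c d = ((g : ℚ) - 1 - 4 * d - (2 * c + 1) ^ 2) / (2 * (2 * c + 1) ^ 2) := by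
      simp [mu, hg2]
    have hden : (0:ℚ) < 2 * (2 * (c:ℚ) + 1) ^ 2 := by positivity
    have hnumQ : 0 < (g : ℚ) - 1 - 4 * d - (2 * c + 1) ^ 2 := by
      rw [hmu'] at hmu
      have := (div_pos_iff.mp hmu)
      rcases this with ⟨h1, _⟩ | ⟨_, h2'⟩
      · exact h1
      · linarith
    have hnum : 0 < g - 1 - 4 * d - (2 * c + 1) ^ 2 := by exact_mod_cast hnumQ
    refine ⟨k - (2*c+1), ?_, ?_, ?_⟩
    · nlinarith [hk]
    · have hodd : Odd (g - 1 - 4*d) := by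
        obtain ⟨m, hm⟩ := hgeven
        exact ⟨m - 2*d - 1, by omega⟩
      rw [hk] at hodd
      have hkodd : Odd k := (Int.odd_mul.mp hodd).2
      exact hkodd.sub_odd ⟨c, by ring⟩
    · rw [hmu']
      push_cast
      field_simp
      linear_combination hkQ
  · intro hg1
    have hg2 : g % 2 ≠ 0 := by omega
    have hmu' : mu g c d = ((g : ℚ) - 1 - 4 * d) / (2 * (2 * c + 1) ^ 2) := by
      simp [mu, hg2]
    have hden : (0:ℚ) < 2 * (2 * (c:ℚ) + 1) ^ 2 := by positivity
    have hnumQ : 0 < (g : ℚ) - 1 - 4 * d := by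
      rw [hmu'] at hmu
      rcases div_pos_iff.mp hmu with ⟨h1, _⟩ | ⟨_, h2'⟩
      · exact h1
      · linarith
    have hnum : 0 < g - 1 - 4 * d := by exact_mod_cast hnumQ
    have h4dvd : (4:ℤ) ∣ (2*c+1)*k := by
      rw [← hk]; omega
    have h4k : (4:ℤ) ∣ k := h4.symm.dvd_of_dvd_mul_left h4dvd
    obtain ⟨j, hj⟩ := h4k
    refine ⟨2*j, ?_, ⟨j, by ring⟩, ?_⟩
    · have : 0 < k := by nlinarith [hk]
      omega
    · rw [hmu']
      push_cast
      field_simp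
      have hjQ : (k:ℚ) = 4*j := by exact_mod_cast hj
      linear_combination hkQ + (2*(c:ℚ)+1) * hjQ
end

section
/- Let g ≥ 4 be an integer and (c,d) ∈ J(g). If g ≢ 3 mod 4, then k⁺(c,d) ≥ 2. If g ≡ 3 mod 4, then k⁺(c,d) ≥ 2 unless (c,d) = ((g−3)/4, 0), in which case k⁺(c,d) = 1, or (c,d) = ((g+1)/4, −1), in which case k⁺(c,d) = 0. -/
/-- `k⁺(c,d)` from Proposition `vbrank`. -/
noncomputable def kplus (g c d : ℤ) : ℚ :=
  ((c : ℚ) + 1) / (2 * c + 1) * ((g : ℚ) - 1 - 4 * d - (2 * c + 1) ^ 2)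
    + (2 * c + 1) * c + d

lemma kplus_eq (g c d e : ℤ) (hc : 0 ≤ c) (he : g - 1 - 4*d = (2*c+1)*e) :
    kplus g c d = (((c+1)*(e-(2*c+1)) + (2*c+1)*c + d : ℤ) : ℚ) := by
  have hc' : (2*(c:ℚ)+1) ≠ 0 := by
    have : (1:ℚ) ≤ 2*(c:ℚ)+1 := by exact_mod_cast (by omega : (1:ℤ) ≤ 2*c+1)
    linarith
  have he' : (g:ℚ) - 1 - 4*d = (2*(c:ℚ)+1)*e := by exact_mod_cast he
  unfold kplus
  push_cast
  field_simp
  linear_combination ((c:ℚ)+1) * he'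

/-- for (c,d) ∈ J(g), if g ≢ 3 mod 4 then k⁺(c,d) ≥ 2, while if
g ≡ 3 mod 4 then k⁺(c,d) ≥ 2 unless (c,d) = ((g−3)/4,0) (where k⁺ = 1) or
(c,d) = ((g+1)/4,−1) (where k⁺ = 0). -/
theorem kplus_lower_bound (g : ℤ) (hg : 4 ≤ g) (c d : ℤ) (h : (c, d) ∈ J g) :
    (g % 4 ≠ 3 → 2 ≤ kplus g c d) ∧
    (g % 4 = 3 →
      ((c, d) = ((g - 3) / 4, 0) → kplus g c d = 1) ∧
      ((c, d) = ((g + 1) / 4, -1) → kplus g c d = 0) ∧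
      ((c, d) ≠ ((g - 3) / 4, 0) → (c, d) ≠ ((g + 1) / 4, -1) →
        2 ≤ kplus g c d)) := by
  obtain ⟨hc, hd, hdvd, hmu⟩ := h
  simp only at hc hd hdvd hmu
  -- (2c+1) divides g-1-4d
  have hdvd2 : (2*c+1) ∣ (g - 1 - 4*d) := by
    have hid : g - 1 - 4*d = 4*((g-1)*c^2 - d) - (g-1)*(2*c-1)*(2*c+1) := by ring
    rw [hid]
    exact dvd_sub (hdvd.mul_left 4) (dvd_mul_left _ _)
  obtain ⟨e, he⟩ := hdvd2
  set k : ℤ := (c+1)*(e-(2*c+1)) + (2*c+1)*c + d with hkdef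
  have hk : kplus g c d = (k : ℚ) := kplus_eq g c d e hc he
  have hcpos : (0:ℤ) < 2*c+1 := by omega
  have hid4 : 4*k = (2*c+3)*e + g - 8*c - 5 := by rw [hkdef]; linear_combination -he
  -- positivity of the numerator of mu
  have hden : (0:ℚ) < 2*(2*(c:ℚ)+1)^2 := by
    have : (1:ℚ) ≤ 2*(c:ℚ)+1 := by exact_mod_cast (by omega : (1:ℤ) ≤ 2*c+1)
    nlinarith
  -- the two exceptional computations (independent of case analysis)
  have hexc1 : g % 4 = 3 → (c, d) = ((g - 3) / 4, 0) → kplus g c d = 1 := by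
    intro hg4 hp
    rw [Prod.mk.injEq] at hp
    obtain ⟨hp1, hp2⟩ := hp
    have h4c : 4*c = g - 3 := by omega
    have he2 : e = 2 := by
      have h1 : (2*c+1)*e = (2*c+1)*2 := by omega
      exact mul_left_cancel₀ (by omega) h1
    rw [hk]
    have : k = 1 := by rw [hkdef, he2, hp2]; ring
    rw [this]; norm_num
  have hexc2 : g % 4 = 3 → (c, d) = ((g + 1) / 4, -1) → kplus g c d = 0 := by
    intro hg4 hp
    rw [Prod.mk.injEq] at hp
    obtain ⟨hp1, hp2⟩ := hp
    have h4c : 4*c = g + 1 := by omega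
    have he2 : e = 2 := by
      have h1 : (2*c+1)*e = (2*c+1)*2 := by omega
      exact mul_left_cancel₀ (by omega) h1
    rw [hk]
    have : k = 0 := by rw [hkdef, he2, hp2]; ring
    rw [this]; norm_num
  by_cases hpar : g % 2 = 0
  · -- g even: always k ≥ 2
    rw [mu, if_pos hpar] at hmu
    have hnum : (0:ℚ) < (g : ℚ) - 1 - 4 * d - (2 * c + 1) ^ 2 := by
      rcases div_pos_iff.mp hmu with ⟨h1, _⟩ | ⟨_, h2⟩
      · exact h1
      · linarith
    have hnumZ : (0:ℤ) < g - 1 - 4*d - (2*c+1)^2 := by exact_mod_cast hnum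
    have hprod : (0:ℤ) < (2*c+1)*(e-(2*c+1)) := by nlinarith [hnumZ, he]
    have hegc : 2*c+2 ≤ e := by
      rcases mul_pos_iff.mp hprod with ⟨_, h2⟩ | ⟨h1, _⟩
      · omega
      · omega
    have hk2 : 2 ≤ k := by
      have h5 : 5 ≤ 4*k := by nlinarith [hid4, mul_nonneg hc (by omega : (0:ℤ) ≤ e - (2*c+2))]
      omega
    have hk2' : (2:ℚ) ≤ kplus g c d := by rw [hk]; exact_mod_cast hk2
    exact ⟨fun _ => hk2', fun h3 => ⟨hexc1 h3, hexc2 h3, fun _ _ => hk2'⟩⟩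
  · -- g odd
    rw [mu, if_neg hpar] at hmu
    have hnum : (0:ℚ) < (g : ℚ) - 1 - 4 * d := by
      rcases div_pos_iff.mp hmu with ⟨h1, _⟩ | ⟨_, h2⟩
      · exact h1
      · linarith
    have hnumZ : (0:ℤ) < g - 1 - 4*d := by exact_mod_cast hnum
    have hprod : (0:ℤ) < (2*c+1)*e := by omega
    have he1 : 1 ≤ e := by
      rcases mul_pos_iff.mp hprod with ⟨_, h2⟩ | ⟨h1, _⟩
      · omega
      · omega
    have heeven : (2:ℤ) ∣ e := by
      have h2 : (2:ℤ) ∣ (2*c+1)*e := by omega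
      rcases (Int.prime_two.2.2 _ _ h2) with h3 | h3
      · omega
      · exact h3
    have htri : e = 2 ∨ (4 ≤ e ∧ e ≤ 2*c) ∨ 2*c+2 ≤ e := by omega
    rcases htri with he2 | ⟨he4, hele⟩ | hegc
    · -- e = 2 : the exceptional region, k = 1 + d
      subst he2
      have hkd : k = 1 + d := by rw [hkdef]; ring
      have hlin : g - 1 - 4*d = 4*c + 2 := by rw [he]; ring
      constructor
      · intro hg4; omega
      · intro hg4
        refine ⟨hexc1 hg4, hexc2 hg4, fun hn1 hn2 => ?_⟩
        have hn1' : ¬(c = (g-3)/4 ∧ d = 0) := fun ⟨h1, h2⟩ => hn1 (by rw [h1, h2])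
        have hn2' : ¬(c = (g+1)/4 ∧ d = -1) := fun ⟨h1, h2⟩ => hn2 (by rw [h1, h2])
        have hk2 : 2 ≤ k := by omega
        rw [hk]; exact_mod_cast hk2
    · -- middle range: k ≥ 2
      have hgge : (2*c+1)*e - 3 ≤ g := by omega
      have hk2 : 2 ≤ k := by
        have h5 : 5 ≤ 4*k := by
          nlinarith [hid4, hgge, mul_nonneg (by omega : (0:ℤ) ≤ 4*c+4) (by omega : (0:ℤ) ≤ e - 4)]
        omega
      have hk2' : (2:ℚ) ≤ kplus g c d := by rw [hk]; exact_mod_cast hk2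
      exact ⟨fun _ => hk2', fun h3 => ⟨hexc1 h3, hexc2 h3, fun _ _ => hk2'⟩⟩
    · -- e ≥ 2c+2 : k ≥ 2
      have hk2 : 2 ≤ k := by
        have h5 : 5 ≤ 4*k := by nlinarith [hid4, mul_nonneg hc (by omega : (0:ℤ) ≤ e - (2*c+2))]
        omega
      have hk2' : (2:ℚ) ≤ kplus g c d := by rw [hk]; exact_mod_cast hk2
      exact ⟨fun _ => hk2', fun h3 => ⟨hexc1 h3, hexc2 h3, fun _ _ => hk2'⟩⟩
end

section
/- Let g ≥ 4 be an integer and (c,d) ∈ J(g). Then k⁻(c,d) ≥ 2 unless (c,d) ∈ {(0,−1),(0,0)}; moreover k⁻(0,−1) = 0, k⁻(0,0) = 1, k⁺(0,−1) = g+1, and k⁺(0,0) = g−2. -/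
/-- `k⁻(c,d)` from Proposition `vbrank`. -/
noncomputable def kminus (g c d : ℤ) : ℚ :=
  (c : ℚ) / (2 * c + 1) * ((g : ℚ) - 1 - 4 * d - (2 * c + 1) ^ 2)
    + (2 * c + 1) * (c + 1) + d

/-- for (c,d) ∈ J(g), k⁻(c,d) ≥ 2 unless (c,d) ∈ {(0,−1),(0,0)};
moreover k⁻(0,−1) = 0, k⁻(0,0) = 1, k⁺(0,−1) = g+1 and k⁺(0,0) = g−2. -/
theorem kminus_lower_bound (g : ℤ) (hg : 4 ≤ g) :
    (∀ c d : ℤ, (c, d) ∈ J g → (c, d) ≠ ((0 : ℤ), (-1 : ℤ)) →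
      (c, d) ≠ ((0 : ℤ), (0 : ℤ)) → 2 ≤ kminus g c d) ∧
    kminus g 0 (-1) = 0 ∧ kminus g 0 0 = 1 ∧
    kplus g 0 (-1) = (g : ℚ) + 1 ∧ kplus g 0 0 = (g : ℚ) - 2 := by
  refine ⟨?_, by norm_num [kminus], by norm_num [kminus], by norm_num [kplus]; ring,
    by norm_num [kplus]; ring⟩
  rintro c d ⟨hc, hd, -, hmu⟩ h1 h2
  rcases eq_or_lt_of_le hc with hc0 | hc1
  · -- c = 0
    have hc0' := hc0.symm
    subst hc0'
    have hd1 : 1 ≤ d := by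
      rcases lt_or_ge d 1 with h | h
      · interval_cases d
        · exact absurd rfl h1
        · exact absurd rfl h2
      · exact h
    have hdq : (1:ℚ) ≤ (d:ℚ) := by exact_mod_cast hd1
    norm_num [kminus]
    linarith
  · have hc1' : (1:ℤ) ≤ c := hc1
    have hcq : (1:ℚ) ≤ (c:ℚ) := by exact_mod_cast hc1'
    have hdq : (-1:ℚ) ≤ (d:ℚ) := by exact_mod_cast hd
    have hD : (0:ℚ) < 2*(c:ℚ)+1 := by linarith
    have hD2 : (0:ℚ) < 2*(2*(c:ℚ)+1)^2 := by positivity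
    unfold mu at hmu
    unfold kminus
    split_ifs at hmu with hpar
    · -- g even
      have hS : (0:ℚ) < (g:ℚ)-1-4*d-(2*c+1)^2 := by
        have := mul_pos hmu hD2
        rwa [div_mul_cancel₀ _ (ne_of_gt hD2)] at this
      have hfrac : (0:ℚ) ≤ (c:ℚ)/(2*c+1) * ((g:ℚ)-1-4*d-(2*c+1)^2) :=
        mul_nonneg (div_nonneg (by linarith) hD.le) hS.le
      nlinarith [sq_nonneg ((c:ℚ))]
    · -- g odd
      have hS : (0:ℚ) < (g:ℚ)-1-4*d := by
        have := mul_pos hmu hD2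
        rwa [div_mul_cancel₀ _ (ne_of_gt hD2)] at this
      have hid : (c:ℚ)/(2*c+1) * ((g:ℚ)-1-4*d-(2*c+1)^2)
          = (c:ℚ)/(2*c+1) * ((g:ℚ)-1-4*d) - c*(2*c+1) := by
        field_simp
      have hfrac : (0:ℚ) ≤ (c:ℚ)/(2*c+1) * ((g:ℚ)-1-4*d) :=
        mul_nonneg (div_nonneg (by linarith) hD.le) hS.le
      nlinarith [hfrac, hid]
end

section
/- Let g ≥ 7 be an integer with g ≡ 3 mod 4, and define ι(c,d) = (((g−3)/4 − d − c)/(2c+1), d). Then for every (c,d) ∈ J(g): the number c′ = ((g−3)/4 − d − c)/(2c+1) is a nonnegative integer satisfying 2c′+1 = (g−1−4d)/(2(2c+1)); the pair ι(c,d) again lies in J(g); and ι(ι(c,d)) = (c,d). Hence ι is an involution of the set J(g). -/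
/-- The involution ι(c,d) = (((g−3)/4 − d − c)/(2c+1), d) of Section 9. -/
def iota (g : ℤ) (p : ℤ × ℤ) : ℤ × ℤ :=
  (((g - 3) / 4 - p.2 - p.1) / (2 * p.1 + 1), p.2)

/-- for g ≡ 3 mod 4, g ≥ 7 and (c,d) ∈ J(g), the number
c′ = ((g−3)/4 − d − c)/(2c+1) is a nonnegative integer with
2c′+1 = (g−1−4d)/(2(2c+1)), the pair ι(c,d) lies again in J(g), and
ι(ι(c,d)) = (c,d); hence ι is an involution of J(g). -/
theorem iota_involution (g : ℤ) (hg : 7 ≤ g) (hg4 : g % 4 = 3) (c d : ℤ)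
    (h : (c, d) ∈ J g) :
    (2 * c + 1) ∣ ((g - 3) / 4 - d - c) ∧
    0 ≤ ((g - 3) / 4 - d - c) / (2 * c + 1) ∧
    (2 * (((g - 3) / 4 - d - c) / (2 * c + 1)) + 1) * (2 * (2 * c + 1))
      = g - 1 - 4 * d ∧
    iota g (c, d) ∈ J g ∧
    iota g (iota g (c, d)) = (c, d) := by
  obtain ⟨hc0, hd0, hdvd, hmu⟩ := h
  simp only at hc0 hd0 hdvd hmu
  obtain ⟨k, hk⟩ : ∃ k, g = 4 * k + 3 := ⟨g / 4, by omega⟩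
  have hk4 : (g - 3) / 4 = k := by omega
  have hg2 : ¬ (g % 2 = 0) := by omega
  -- numerator of mu is positive
  have hnum : 0 < g - 1 - 4 * d := by
    rw [mu, if_neg hg2] at hmu
    have hden : (0:ℚ) < 2 * (2 * (c:ℚ) + 1) ^ 2 := by
      have : (2 * (c:ℚ) + 1) ≠ 0 := by
        intro hcontra
        have : (2 * c + 1 : ℤ) = 0 := by exact_mod_cast hcontra
        omega
      positivity
    have := (div_pos_iff_of_pos_right hden).mp hmu
    have : (0:ℚ) < ((g - 1 - 4 * d : ℤ) : ℚ) := by push_cast; linarith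
    exact_mod_cast this
  obtain ⟨t, ht⟩ := hdvd
  have hd1 : (2 * c + 1) ∣ (k - d - c) :=
    ⟨t - k * (2 * c - 1) - c, by linear_combination ht - c ^ 2 * hk⟩
  obtain ⟨c', hc'⟩ := hd1
  have hne : (2 * c + 1) ≠ 0 := by omega
  have hdiv : ((g - 3) / 4 - d - c) / (2 * c + 1) = c' := by
    rw [hk4, hc', Int.mul_ediv_cancel_left _ hne]
  have hprod : (2 * c + 1) * (2 * c' + 1) = 2 * k + 1 - 2 * d := by
    linear_combination (-2) * hc'
  have hc'0 : 0 ≤ c' := by nlinarith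
  have hne' : (2 * c' + 1) ≠ 0 := by omega
  have hiota : iota g (c, d) = (c', d) := by
    simp only [iota, hdiv]
  refine ⟨by rw [hk4, hc']; exact Dvd.intro _ rfl, hdiv ▸ hc'0, ?_, ?_, ?_⟩
  · rw [hdiv]; linear_combination 2 * hprod - hk
  · rw [hiota]
    refine ⟨hc'0, hd0, ⟨c + k * (2 * c' - 1) + c', ?_⟩, ?_⟩
    · simp only
      linear_combination c' ^ 2 * hk + hc'
    · simp only [mu, if_neg hg2]
      have hden : (0:ℚ) < 2 * (2 * (c':ℚ) + 1) ^ 2 := by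
        have : (2 * (c':ℚ) + 1) ≠ 0 := by
          intro hcontra
          have : (2 * c' + 1 : ℤ) = 0 := by exact_mod_cast hcontra
          omega
        positivity
      apply div_pos _ hden
      have : (0:ℚ) < ((g - 1 - 4 * d : ℤ) : ℚ) := by exact_mod_cast hnum
      push_cast at this ⊢; linarith
  · rw [hiota]
    have hback : k - d - c' = (2 * c' + 1) * c := by linear_combination hc'
    simp only [iota, hk4, hback, Int.mul_ediv_cancel_left _ hne']
end

section
/- Let g ≥ 7 be an integer with g ≡ 3 mod 4, and let (c,d) ∈ J(g). Then μ(ι(c,d)) = 1/μ(c,d), where ι(c,d) = (((g−3)/4 − d − c)/(2c+1), d). -/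
/-- for g ≡ 3 mod 4, g ≥ 7 and (c,d) ∈ J(g), μ(ι(c,d)) = 1/μ(c,d). -/
theorem iota_inverts_slope (g : ℤ) (hg : 7 ≤ g) (hg4 : g % 4 = 3) (c d : ℤ)
    (h : (c, d) ∈ J g) :
    mu g (iota g (c, d)).1 (iota g (c, d)).2 = 1 / mu g c d := by
  obtain ⟨hc, hd, hdvd, hpos⟩ := h
  simp only at hc hd hdvd hpos
  -- g is odd
  have hodd : g % 2 = 1 := by omega
  have hodd' : ¬ g % 2 = 0 := by omega
  -- k = (g-3)/4
  set k : ℤ := (g - 3) / 4 with hk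
  have hgk : g = 4 * k + 3 := by omega
  -- (2c+1) ∣ (k - d - c)
  have hdvd2 : (2 * c + 1) ∣ (k - d - c) := by
    have : k - d - c = ((g - 1) * c ^ 2 - d) - (2 * c + 1) * (2 * k * c - k + c) := by
      rw [hgk]; ring
    rw [this]
    exact dvd_sub hdvd (Dvd.intro _ rfl)
  set c' : ℤ := (k - d - c) / (2 * c + 1) with hc'
  have hcc' : (2 * c + 1) * c' = k - d - c := Int.mul_ediv_cancel' hdvd2
  have hkey : (2 * c + 1) * (2 * c' + 1) = 2 * k + 1 - 2 * d := by
    have : (2 * c + 1) * (2 * c' + 1) = 2 * ((2 * c + 1) * c') + (2 * c + 1) := by ring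
    rw [this, hcc']; ring
  -- positivity facts
  have hcpos : (0 : ℤ) < 2 * c + 1 := by omega
  have hnum : (0 : ℤ) < 2 * k + 1 - 2 * d := by
    by_contra hcon
    push_neg at hcon
    have hnq : ((g : ℚ) - 1 - 4 * d) ≤ 0 := by
      have : ((2 * k + 1 - 2 * d : ℤ) : ℚ) ≤ 0 := by exact_mod_cast hcon
      push_cast at this ⊢
      have hgq : (g : ℚ) = 4 * (k : ℚ) + 3 := by exact_mod_cast hgk
      rw [hgq]; linarith
    have hdenq : (0 : ℚ) < 2 * (2 * (c : ℚ) + 1) ^ 2 := by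
      have : (0 : ℚ) < 2 * (c : ℚ) + 1 := by exact_mod_cast hcpos
      positivity
    rw [mu, if_neg hodd'] at hpos
    have := div_pos_iff.mp hpos
    rcases this with ⟨h1, _⟩ | ⟨_, h2⟩
    · linarith
    · linarith
  have hc'pos : (0 : ℤ) < 2 * c' + 1 := by
    nlinarith [hkey]
  -- now compute
  have hiota1 : (iota g (c, d)).1 = c' := by
    simp only [iota, hc']; rfl
  have hiota2 : (iota g (c, d)).2 = d := rfl
  rw [hiota1, hiota2, mu, mu, if_neg hodd', if_neg hodd']
  -- rational versions
  have hcq : (0 : ℚ) < 2 * (c : ℚ) + 1 := by exact_mod_cast hcpos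
  have hc'q : (0 : ℚ) < 2 * (c' : ℚ) + 1 := by exact_mod_cast hc'pos
  have hnumq : (0 : ℚ) < (g : ℚ) - 1 - 4 * d := by
    have : ((2 * (2 * k + 1 - 2 * d) : ℤ) : ℚ) > 0 := by exact_mod_cast (by omega : (0:ℤ) < 2 * (2 * k + 1 - 2 * d))
    have hgq : (g : ℚ) = 4 * (k : ℚ) + 3 := by exact_mod_cast hgk
    push_cast at this
    rw [hgq]; linarith
  have hkeyq : (2 * (c : ℚ) + 1) * (2 * (c' : ℚ) + 1) * 2 = (g : ℚ) - 1 - 4 * d := by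
    have : ((2 * c + 1) * (2 * c' + 1) : ℤ) = ((2 * k + 1 - 2 * d : ℤ)) := hkey
    have h2 : ((2 * c + 1 : ℤ) : ℚ) * ((2 * c' + 1 : ℤ) : ℚ) = ((2 * k + 1 - 2 * d : ℤ) : ℚ) := by
      exact_mod_cast this
    have hgq : (g : ℚ) = 4 * (k : ℚ) + 3 := by exact_mod_cast hgk
    push_cast at h2
    rw [hgq]; linarith
  rw [one_div_div, div_eq_div_iff (by positivity) (by positivity : ((g:ℚ) - 1 - 4 * d) ≠ 0)]
  nlinarith [hkeyq, sq_nonneg ((2 * (c : ℚ) + 1) * (2 * (c' : ℚ) + 1))]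
end

section
/- Let g ≥ 7 be an integer with g ≡ 3 mod 4, and let (c,d) ∈ J(g). Then k⁺(ι(c,d)) = k⁻(c,d) and k⁻(ι(c,d)) = k⁺(c,d), where ι(c,d) = (((g−3)/4 − d − c)/(2c+1), d). -/
/-- for g ≡ 3 mod 4, g ≥ 7 and (c,d) ∈ J(g),
k⁺(ι(c,d)) = k⁻(c,d) and k⁻(ι(c,d)) = k⁺(c,d). -/
theorem iota_swaps_kpm (g : ℤ) (hg : 7 ≤ g) (hg4 : g % 4 = 3) (c d : ℤ)
    (h : (c, d) ∈ J g) :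
    kplus g (iota g (c, d)).1 (iota g (c, d)).2 = kminus g c d ∧
    kminus g (iota g (c, d)).1 (iota g (c, d)).2 = kplus g c d := by
  obtain ⟨hc0, hd, hdvd, hmu⟩ := h
  simp only at hc0 hd hdvd hmu
  set m : ℤ := (g - 3) / 4 with hmdef
  have hg' : g = 4 * m + 3 := by omega
  have hdvd2 : (2 * c + 1) ∣ (m - d - c) := by
    have h2 : m - d - c = ((g - 1) * c ^ 2 - d) - (2 * c + 1) * (m * (2 * c - 1) + c) := by
      linear_combination (-(c ^ 2)) * hg'
    rw [h2]
    exact dvd_sub hdvd ⟨m * (2 * c - 1) + c, rfl⟩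
  set c' : ℤ := (m - d - c) / (2 * c + 1) with hc'def
  have hc' : (2 * c + 1) * c' = m - d - c := Int.mul_ediv_cancel' hdvd2
  have hfst : (iota g (c, d)).1 = c' := rfl
  have hsnd : (iota g (c, d)).2 = d := rfl
  rw [hfst, hsnd]
  -- positivity of numerator
  have hodd : ¬ (g % 2 = 0) := by omega
  rw [mu, if_neg hodd] at hmu
  have hnum : (0 : ℚ) < (g : ℚ) - 1 - 4 * d := by
    have hden : (0 : ℚ) < 2 * ((2 * (c : ℚ) + 1)) ^ 2 := by
      have : (0 : ℚ) < 2 * (c : ℚ) + 1 := by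
        have : (0 : ℚ) ≤ (c : ℚ) := by exact_mod_cast hc0
        linarith
      positivity
    by_contra hle
    push_neg at hle
    have := div_nonpos_of_nonpos_of_nonneg hle (le_of_lt hden)
    linarith
  have hnumZ : 0 < g - 1 - 4 * d := by exact_mod_cast hnum
  have hkeyZ : g - 1 - 4 * d = 2 * (2 * c + 1) * (2 * c' + 1) := by
    linear_combination hg' - 4 * hc'
  have hc'pos : 0 < 2 * c' + 1 := by nlinarith
  have hN : (2 * (c : ℚ) + 1) ≠ 0 := by
    have : (0 : ℚ) ≤ (c : ℚ) := by exact_mod_cast hc0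
    linarith
  have hN' : (2 * (c' : ℚ) + 1) ≠ 0 := by
    have : (0 : ℚ) < 2 * (c' : ℚ) + 1 := by exact_mod_cast hc'pos
    linarith
  have key : ((g : ℚ) - 1 - 4 * d) = 2 * (2 * c + 1) * (2 * c' + 1) := by
    exact_mod_cast hkeyZ
  constructor
  · unfold kplus kminus
    rw [key]
    field_simp
    rw [mul_div_cancel_left₀ _ (by rwa [mul_comm] at hN')]
    ring
  · unfold kplus kminus
    rw [key]
    field_simp
    rw [mul_div_cancel_left₀ _ (by rwa [mul_comm] at hN')]
    ring
end

section
/- Let g ≥ 7 be an integer with g ≡ 3 mod 4, and let θ : ℚ³ → ℚ³ be the ℚ-linear map determined by θ(0,0,−1) = (2,−1,(g−1)/2), θ(2,−1,(g−1)/2) = (0,0,−1), and θ(0,1,1−g) = (0,1,1−g). Then θ preserves the Mukai pairing ⟨(r,a,s),(r′,a′,s′)⟩ = (2g−2)aa′ − rs′ − r′s, and for every (c,d) ∈ J(g), writing (c′,d) = ι(c,d), one has θ(v_{c,d}) = v − v_{c′,d} in ℚ³. -/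
/-- The Mukai pairing on ℚ³: ⟨(r,a,s),(r′,a′,s′)⟩ = (2g−2)aa′ − rs′ − r′s. -/
def mukaiPairingQ (g : ℤ) (x y : ℚ × ℚ × ℚ) : ℚ :=
  (2 * (g : ℚ) - 2) * x.2.1 * y.2.1 - x.1 * y.2.2 - y.1 * x.2.2

/-- The Mukai vector v = (0,1,1−g), in ℚ³. -/
def vQ (g : ℤ) : ℚ × ℚ × ℚ := (0, 1, 1 - (g : ℚ))

/-- The Mukai vector v_{c,d} = (2c+1, −c, ((g−1)c²−d)/(2c+1)), in ℚ³. -/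
def vcdQ (g c d : ℤ) : ℚ × ℚ × ℚ :=
  (2 * (c : ℚ) + 1, -(c : ℚ), (((g : ℚ) - 1) * (c : ℚ) ^ 2 - (d : ℚ)) / (2 * (c : ℚ) + 1))

/-- for g ≥ 7, g ≡ 3 mod 4, the ℚ-linear map θ determined by
θ(0,0,−1) = (2,−1,(g−1)/2), θ(2,−1,(g−1)/2) = (0,0,−1) and θ(0,1,1−g) = (0,1,1−g)
preserves the Mukai pairing, and for every (c,d) ∈ J(g) one has
θ(v_{c,d}) = v − v_{c′,d} with c′ = ((g−3)/4 − d − c)/(2c+1). -/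
theorem theta_action (g : ℤ) (hg : 7 ≤ g) (hg4 : g % 4 = 3)
    (θ : (ℚ × ℚ × ℚ) →ₗ[ℚ] (ℚ × ℚ × ℚ))
    (h1 : θ (0, 0, -1) = (2, -1, ((g : ℚ) - 1) / 2))
    (h2 : θ (2, -1, ((g : ℚ) - 1) / 2) = (0, 0, -1))
    (h3 : θ (0, 1, 1 - (g : ℚ)) = (0, 1, 1 - (g : ℚ))) :
    (∀ x y : ℚ × ℚ × ℚ, mukaiPairingQ g (θ x) (θ y) = mukaiPairingQ g x y) ∧
    (∀ c d : ℤ, (c, d) ∈ J g →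
      θ (vcdQ g c d) = vQ g - vcdQ g (((g - 3) / 4 - d - c) / (2 * c + 1)) d) := by
  have key : ∀ r a s : ℚ, θ (r, a, s) =
      ((-s + (1 - (g : ℚ)) * a - r * ((g : ℚ) - 1) / 4) • ((2 : ℚ), (-1 : ℚ), ((g : ℚ) - 1) / 2)
        + (r / 2) • ((0 : ℚ), (0 : ℚ), (-1 : ℚ))
        + (a + r / 2) • ((0 : ℚ), (1 : ℚ), 1 - (g : ℚ))) := by
    intro r a s
    have hd : (r, a, s) =
        (-s + (1 - (g : ℚ)) * a - r * ((g : ℚ) - 1) / 4) • ((0 : ℚ), (0 : ℚ), (-1 : ℚ))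
          + (r / 2) • ((2 : ℚ), (-1 : ℚ), ((g : ℚ) - 1) / 2)
          + (a + r / 2) • ((0 : ℚ), (1 : ℚ), 1 - (g : ℚ)) := by
      simp only [Prod.smul_mk, smul_eq_mul, Prod.mk_add_mk, Prod.ext_iff]
      refine ⟨by ring, by ring, by ring⟩
    rw [hd, map_add, map_add, map_smul, map_smul, map_smul, h1, h2, h3]
  constructor
  · rintro ⟨xr, xa, xs⟩ ⟨yr, ya, ys⟩
    rw [key, key]
    simp only [Prod.smul_mk, smul_eq_mul, Prod.mk_add_mk, mukaiPairingQ]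
    ring
  · intro c d hcd
    obtain ⟨hc0, hd0, hdvd, hmu⟩ := hcd
    -- integer arithmetic: divisibility of (g-3)/4 - d - c by 2c+1
    have hk4 : 4 * ((g - 3) / 4) = g - 3 := by omega
    have hdvd2 : (2 * c + 1) ∣ ((g - 3) / 4 - d - c) := by
      have hcop2 : IsCoprime (2 * c + 1) (2 : ℤ) := ⟨1, -c, by ring⟩
      have hcop4 : IsCoprime (2 * c + 1) (4 : ℤ) := by
        have := hcop2.mul_right hcop2
        norm_num at this
        exact this
      have h4 : (2 * c + 1) ∣ ((g - 3) / 4 - d - c) * 4 := by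
        have heq : ((g - 3) / 4 - d - c) * 4
            = 4 * ((g - 1) * c ^ 2 - d) - (2 * c + 1) * ((g - 1) * (2 * c - 1) + 2) := by
          rw [sub_mul, sub_mul, mul_comm ((g-3)/4) 4, hk4]; ring
        rw [heq]
        exact dvd_sub (Dvd.dvd.mul_left hdvd 4) (Dvd.dvd.mul_right dvd_rfl _)
      exact hcop4.dvd_of_dvd_mul_right h4
    set c' : ℤ := ((g - 3) / 4 - d - c) / (2 * c + 1) with hc'def
    have hc' : (2 * c + 1) * c' = (g - 3) / 4 - d - c := Int.mul_ediv_cancel' hdvd2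
    have hc'Q : (2 * (c : ℚ) + 1) * (c' : ℚ) * 4 = (g : ℚ) - 3 - 4 * d - 4 * c := by
      have := congrArg (fun n : ℤ => (n : ℚ)) hc'
      push_cast at this
      have hkQ : (4 : ℚ) * (((g - 3) / 4 : ℤ) : ℚ) = (g : ℚ) - 3 := by
        have := congrArg (fun n : ℤ => (n : ℚ)) hk4
        push_cast at this
        linarith
      linarith [this, hkQ]
    have hcne : (2 * (c : ℚ) + 1) ≠ 0 := by
      have : (0 : ℚ) ≤ (c : ℚ) := by exact_mod_cast hc0
      positivity
    have hc'ne : (2 * (c' : ℚ) + 1) ≠ 0 := by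
      intro h
      have : ((2 * c' + 1 : ℤ) : ℚ) = 0 := by push_cast; linarith
      have h2 : (2 * c' + 1 : ℤ) = 0 := by exact_mod_cast this
      omega
    simp only [key, vcdQ, vQ, Prod.smul_mk, smul_eq_mul, Prod.mk_add_mk, Prod.mk_sub_mk,
      Prod.ext_iff]
    refine ⟨?_, ?_, ?_⟩
    · field_simp
      linear_combination 4 * hc'Q
    · field_simp
      linear_combination (-2) * hc'Q
    · field_simp
      linear_combination (4 * (((g : ℚ) - 1) * (2 * (c' : ℚ) + 1) - 2 * (2 * (c : ℚ) + 1)) + 9 + 12 * (c : ℚ) + 6 * (c' : ℚ) - 3 * (g : ℚ) - 6 * (g : ℚ) * (c' : ℚ)) * hc'Q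
end

section
/- Let g be an odd integer and let θ : ℚ³ → ℚ³ be the ℚ-linear map determined by θ(0,0,−1) = (2,−1,(g−1)/2), θ(2,−1,(g−1)/2) = (0,0,−1), and θ(0,1,1−g) = (0,1,1−g). Then θ(0,1,0) = (2−2g, g, −(g²−1)/2); in particular, if g ≡ 3 mod 4, then θ(0,1,0) − g·(0,1,0) = (2g−2)·(−1, 0, −(g+1)/4) lies in (2g−2)·ℤ³. -/
/-- for odd g, the ℚ-linear map θ determined by
θ(0,0,−1) = (2,−1,(g−1)/2), θ(2,−1,(g−1)/2) = (0,0,−1) and θ(0,1,1−g) = (0,1,1−g)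
satisfies θ(0,1,0) = (2−2g, g, −(g²−1)/2); in particular, for g ≡ 3 mod 4,
θ(0,1,0) − g·(0,1,0) = (2g−2)·(−1,0,−(g+1)/4) lies in (2g−2)·ℤ³. -/
theorem theta_discriminant_action (g : ℤ) (hgo : Odd g)
    (θ : (ℚ × ℚ × ℚ) →ₗ[ℚ] (ℚ × ℚ × ℚ))
    (h1 : θ (0, 0, -1) = (2, -1, ((g : ℚ) - 1) / 2))
    (h2 : θ (2, -1, ((g : ℚ) - 1) / 2) = (0, 0, -1))
    (h3 : θ (0, 1, 1 - (g : ℚ)) = (0, 1, 1 - (g : ℚ))) :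
    θ (0, 1, 0) = (2 - 2 * (g : ℚ), (g : ℚ), -(((g : ℚ) ^ 2 - 1) / 2)) ∧
    (g % 4 = 3 →
      θ (0, 1, 0) - (g : ℚ) • ((0 : ℚ), (1 : ℚ), (0 : ℚ))
        = (2 * (g : ℚ) - 2) • ((-1 : ℚ), (0 : ℚ), -(((g : ℚ) + 1) / 4)) ∧
      ∃ w : ℤ × ℤ × ℤ,
        θ (0, 1, 0) - (g : ℚ) • ((0 : ℚ), (1 : ℚ), (0 : ℚ))
          = (2 * (g : ℚ) - 2) • ((w.1 : ℚ), (w.2.1 : ℚ), (w.2.2 : ℚ))) := by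
  have key : θ (0, 1, 0) = (2 - 2 * (g : ℚ), (g : ℚ), -(((g : ℚ) ^ 2 - 1) / 2)) := by
    have hdecomp : ((0 : ℚ), (1 : ℚ), (0 : ℚ))
        = (1 - (g : ℚ)) • ((0 : ℚ), (0 : ℚ), (-1 : ℚ)) + (0, 1, 1 - (g : ℚ)) := by
      simp [Prod.ext_iff]
    rw [hdecomp, map_add, map_smul, h1, h3]
    simp only [Prod.ext_iff, Prod.mk_add_mk, Prod.smul_mk, smul_eq_mul]
    exact ⟨by ring, by ring, by ring⟩
  refine ⟨key, fun hg4 => ?_⟩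
  have h4 : (4 : ℤ) ∣ g + 1 := by omega
  obtain ⟨k, hk⟩ := h4
  have hkQ : ((g : ℚ) + 1) / 4 = (k : ℚ) := by
    have : ((g : ℚ) + 1) = 4 * (k : ℚ) := by exact_mod_cast hk
    rw [this]; ring
  constructor
  · rw [key]
    simp only [Prod.ext_iff, Prod.mk_sub_mk, Prod.smul_mk, smul_eq_mul]
    exact ⟨by ring, by ring, by ring⟩
  · refine ⟨(-1, 0, -k), ?_⟩
    rw [key]
    simp only [Prod.ext_iff, Prod.mk_sub_mk, Prod.smul_mk, smul_eq_mul,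
      Int.cast_neg, Int.cast_one, Int.cast_zero, ← hkQ]
    exact ⟨by ring, by ring, by ring⟩
end
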